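/- Suppose |v(t)| ≤ v_max, |Ω(t)| ≤ Ω_max, |R₃₃(t)| ≥ ρ for all t, with v_max Ω_max < g ρ²/√6, and m ∈ S² not collinear with e₃. Then there exist ε₁, ε₂ > 0 and μ > 0 such that for all t and all x, y ∈ R^3: (ε₂ g² ρ²/(2(1+ε₂)) - ε₁ v_max²)(x₁²+x₂²) + ((m₁²+m₂²) ε₂g²ρ²/((1+ε₂)(2m₃²) + ε₂g²ρ²)) x₃² + (ε₁ρ²/(3(1+ε₁)) - ε₂ Ω_max²)|y|² ≥ μ(|x|²+|y|²), with all three coefficients positive. -/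

import Mathlib

/-!
The slow-motion condition squares to `vmax² Ωmax² < (g²ρ²/2)(ρ²/3)`, which is exactly what is
needed to pick `ε₁ = r ε₂` with `vmax² r < g²ρ²/2` and `3Ωmax²/ρ² < r`; the two coupled
inequalities on `ε₁, ε₂` then hold for every small enough `ε₂ > 0`, since the factors
`1 + εᵢ` tend to `1`. With all three coefficients positive, their minimum serves as `μ`.
-/

open Matrix

/-- Sum of squares of the components of a vector in `ℝ³` (the squared Euclidean norm). -/
def sq3 (u : Fin 3 → ℝ) : ℝ := u 0 ^ 2 + u 1 ^ 2 + u 2 ^ 2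

open Filter Topology

theorem exists_pos_mul_lt_mul_div_one_add {P Q V W : ℝ} (hP : 0 < P) (hQ : 0 < Q)
    (hV : 0 ≤ V) (hW : 0 ≤ W) (h : V * W < P * Q) :
    ∃ ε₁ ε₂ : ℝ, 0 < ε₁ ∧ 0 < ε₂ ∧
      ε₁ * V < ε₂ * P / (1 + ε₂) ∧ ε₂ * W < ε₁ * Q / (1 + ε₁) := by
  -- the mediant of `P / V` and `W / Q` lies strictly between them
  set r := (P + W) / (V + Q)
  have hVQ : 0 < V + Q := by positivity
  have hr : 0 < r := by positivity
  have hrV : r * V < P := by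
    rw [div_mul_eq_mul_div, div_lt_iff₀ hVQ]; nlinarith
  have hrQ : W < r * Q := by
    rw [div_mul_eq_mul_div, lt_div_iff₀ hVQ]; nlinarith
  have hsmall : ∀ᶠ ε in 𝓝 (0 : ℝ), r * V * (1 + ε) < P ∧ W * (1 + r * ε) < r * Q :=
    (ContinuousAt.eventually_lt (by fun_prop) continuousAt_const (by simpa using hrV)).and
      (ContinuousAt.eventually_lt (by fun_prop) continuousAt_const (by simpa using hrQ))
  obtain ⟨ε, ⟨hεV, hεQ⟩, hε⟩ :=
    ((hsmall.filter_mono nhdsWithin_le_nhds).and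
      (eventually_mem_nhdsWithin (a := (0 : ℝ)) (s := Set.Ioi 0))).exists
  have hε : 0 < ε := hε
  refine ⟨r * ε, ε, by positivity, hε, ?_, ?_⟩
  · rw [lt_div_iff₀ (by linarith)]; nlinarith
  · rw [lt_div_iff₀ (by positivity)]; nlinarith

theorem sq_lt_div_of_lt_div_sqrt {a b c : ℝ} (ha : 0 ≤ a) (hc : 0 ≤ c) (h : a < b / √c) :
    a ^ 2 < b ^ 2 / c := by
  simpa [div_pow, Real.sq_sqrt hc] using pow_lt_pow_left₀ h ha two_ne_zero

theorem min_min_mul_sq3_add_le (a b c : ℝ) (x y : Fin 3 → ℝ) :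
    min a (min b c) * (sq3 x + sq3 y) ≤ a * (x 0 ^ 2 + x 1 ^ 2) + b * x 2 ^ 2 + c * sq3 y := by
  have hμa : min a (min b c) ≤ a := min_le_left _ _
  have hμb : min a (min b c) ≤ b := (min_le_right _ _).trans (min_le_left _ _)
  have hμc : min a (min b c) ≤ c := (min_le_right _ _).trans (min_le_right _ _)
  have hy : 0 ≤ sq3 y := by unfold sq3; positivity
  calc min a (min b c) * (sq3 x + sq3 y)
      = min a (min b c) * (x 0 ^ 2 + x 1 ^ 2) + min a (min b c) * x 2 ^ 2
          + min a (min b c) * sq3 y := by unfold sq3; ring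
    _ ≤ a * (x 0 ^ 2 + x 1 ^ 2) + b * x 2 ^ 2 + c * sq3 y := by gcongr

theorem stmt16_general (g ρ vmax Ωmax : ℝ)
    (hg : 0 < g) (hρ : 0 < ρ) (hv : 0 < vmax) (hΩ : 0 < Ωmax)
    (hslow : vmax * Ωmax < g * ρ ^ 2 / Real.sqrt 6)
    (m : Fin 3 → ℝ)
    (hnc : m 0 ^ 2 + m 1 ^ 2 > 0) :
    ∃ ε₁ ε₂ μ : ℝ, 0 < ε₁ ∧ 0 < ε₂ ∧ 0 < μ ∧
      0 < ε₂ * g ^ 2 * ρ ^ 2 / (2 * (1 + ε₂)) - ε₁ * vmax ^ 2 ∧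
      0 < (m 0 ^ 2 + m 1 ^ 2) * ε₂ * g ^ 2 * ρ ^ 2
            / ((1 + ε₂) * (2 * m 2 ^ 2) + ε₂ * g ^ 2 * ρ ^ 2) ∧
      0 < ε₁ * ρ ^ 2 / (3 * (1 + ε₁)) - ε₂ * Ωmax ^ 2 ∧
      ∀ (t : ℝ) (x y : Fin 3 → ℝ),
        (ε₂ * g ^ 2 * ρ ^ 2 / (2 * (1 + ε₂)) - ε₁ * vmax ^ 2) * (x 0 ^ 2 + x 1 ^ 2)
          + ((m 0 ^ 2 + m 1 ^ 2) * ε₂ * g ^ 2 * ρ ^ 2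
              / ((1 + ε₂) * (2 * m 2 ^ 2) + ε₂ * g ^ 2 * ρ ^ 2)) * x 2 ^ 2
          + (ε₁ * ρ ^ 2 / (3 * (1 + ε₁)) - ε₂ * Ωmax ^ 2) * sq3 y ≥
        μ * (sq3 x + sq3 y) := by
  have hsq : (vmax * Ωmax) ^ 2 < (g * ρ ^ 2) ^ 2 / 6 :=
    sq_lt_div_of_lt_div_sqrt (by positivity) (by norm_num) hslow
  obtain ⟨ε₁, ε₂, hε₁, hε₂, hV, hW⟩ :=
    exists_pos_mul_lt_mul_div_one_add (P := g ^ 2 * ρ ^ 2 / 2) (Q := ρ ^ 2 / 3)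
      (by positivity) (by positivity) (sq_nonneg vmax) (sq_nonneg Ωmax) (by linarith)
  have hcA : 0 < ε₂ * g ^ 2 * ρ ^ 2 / (2 * (1 + ε₂)) - ε₁ * vmax ^ 2 := by
    rw [sub_pos]; convert hV using 1; rw [div_mul_eq_div_div_swap]; ring
  have hcM : 0 < (m 0 ^ 2 + m 1 ^ 2) * ε₂ * g ^ 2 * ρ ^ 2
      / ((1 + ε₂) * (2 * m 2 ^ 2) + ε₂ * g ^ 2 * ρ ^ 2) := by positivity
  have hcB : 0 < ε₁ * ρ ^ 2 / (3 * (1 + ε₁)) - ε₂ * Ωmax ^ 2 := by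
    rw [sub_pos]; convert hW using 1; rw [div_mul_eq_div_div_swap]; ring
  exact ⟨ε₁, ε₂, _, hε₁, hε₂, lt_min hcA (lt_min hcM hcB), hcA, hcM, hcB,
    fun _ x y => min_min_mul_sq3_add_le _ _ _ x y⟩

/-- Slow-motion case (Case 3) of the observability lemma: under the bounds
`|v(t)| ≤ v_max`, `|Ω(t)| ≤ Ω_max`, `|R₃₃(t)| ≥ ρ` with `v_max Ω_max < gρ²/√6`,
there exist `ε₁, ε₂, μ > 0`, with all three coefficients positive, such that the
stated quadratic lower bound holds for all `t` and all `x, y ∈ ℝ³`. -/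
theorem stmt16 (g ρ vmax Ωmax : ℝ)
    (hg : 0 < g) (hρ : 0 < ρ) (hv : 0 < vmax) (hΩ : 0 < Ωmax)
    (hslow : vmax * Ωmax < g * ρ ^ 2 / Real.sqrt 6)
    (m : Fin 3 → ℝ) (hm : m 0 ^ 2 + m 1 ^ 2 + m 2 ^ 2 = 1)
    (hnc : m 0 ^ 2 + m 1 ^ 2 > 0)
    (v Ω : ℝ → Fin 3 → ℝ) (R : ℝ → Matrix (Fin 3) (Fin 3) ℝ)
    (hvb : ∀ t : ℝ, Real.sqrt (sq3 (v t)) ≤ vmax)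
    (hΩb : ∀ t : ℝ, Real.sqrt (sq3 (Ω t)) ≤ Ωmax)
    (hR33 : ∀ t : ℝ, |R t 2 2| ≥ ρ) :
    ∃ ε₁ ε₂ μ : ℝ, 0 < ε₁ ∧ 0 < ε₂ ∧ 0 < μ ∧
      0 < ε₂ * g ^ 2 * ρ ^ 2 / (2 * (1 + ε₂)) - ε₁ * vmax ^ 2 ∧
      0 < (m 0 ^ 2 + m 1 ^ 2) * ε₂ * g ^ 2 * ρ ^ 2
            / ((1 + ε₂) * (2 * m 2 ^ 2) + ε₂ * g ^ 2 * ρ ^ 2) ∧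
      0 < ε₁ * ρ ^ 2 / (3 * (1 + ε₁)) - ε₂ * Ωmax ^ 2 ∧
      ∀ (t : ℝ) (x y : Fin 3 → ℝ),
        (ε₂ * g ^ 2 * ρ ^ 2 / (2 * (1 + ε₂)) - ε₁ * vmax ^ 2) * (x 0 ^ 2 + x 1 ^ 2)
          + ((m 0 ^ 2 + m 1 ^ 2) * ε₂ * g ^ 2 * ρ ^ 2
              / ((1 + ε₂) * (2 * m 2 ^ 2) + ε₂ * g ^ 2 * ρ ^ 2)) * x 2 ^ 2
          + (ε₁ * ρ ^ 2 / (3 * (1 + ε₁)) - ε₂ * Ωmax ^ 2) * sq3 y ≥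
        μ * (sq3 x + sq3 y) :=
  stmt16_general g ρ vmax Ωmax hg hρ hv hΩ hslow m hnc
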